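/- Let d ∈ ℕ, d ≥ 1, let γ > 0 be real, let α > 5/2 be real, and let v̂ : ℤ^d → ℂ satisfy ‖v̂‖_α < ∞. Then there exists a constant c₁ > 0, depending only on d, α, γ and v̂ (in particular independent of the modulus, the generating vector, the anti-aliasing family and the vector y), such that for every modulus n ≥ 1, every generating vector z ∈ ℤ^d, every minimal anti-aliasing family h_0,…,h_{n−1} for (z, n), and every y ∈ ℂ^n: ‖(DW − WD) y‖₂ ≤ c₁ · ‖(D + I) y‖₂, where D, W ∈ ℂ^{n×n} are the matrices defined in the context and I is the identity matrix. -/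

import Mathlib

/-!
The commutator has entries `(D_ξ - D_ξ') W_{ξξ'}`. If `h·z ≡ ξ - ξ'`, then `h_ξ' + h` lies in the
class of `ξ` and `h_ξ - h` in that of `ξ'`, so minimality gives `|‖h_ξ‖ - ‖h_ξ'‖| ≤ ‖h‖`, and with
`c = 2π²γ` this yields `|D_ξ - D_ξ'| ≤ (√c + c) (1 + D_ξ') (1 + ‖h‖²)` for every `h` contributing
to `W_{ξξ'}`. Hence `|[D, W]_{ξξ'}| ≤ g(ξ - ξ') (1 + D_ξ')` with
`g(r) = (√c + c)/γ · Σ_{h·z ≡ r} |v̂(h)| (1 + ‖h‖²)`, and Schur's test bounds this circulant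
kernel on `ℓ²` by `Σ_r g(r) = (√c + c)/γ · Σ_h |v̂(h)| (1 + ‖h‖²)`, a constant independent of the
lattice. That sum is finite by AM-GM against the Korobov weight: `(1 + ‖h‖²)² / r_α(h)²` is
bounded by `∏_j (1 + h_j²)² / max(|h_j|^{2α}, 1)`, whose factors decay like `|h_j|^{4-2α}` and
are summable over `ℤ` because `2α - 4 > 1`.
-/

noncomputable section

/-- Integer dot product on `ℤ^d`. -/
def dotZ {d : ℕ} (h z : Fin d → ℤ) : ℤ := ∑ i, h i * z i

/-- The squared Korobov weight `r_α(h)² = ∏_j max(|h_j|^(2α), 1)`. -/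
def korWeightSq {d : ℕ} (α : ℝ) (h : Fin d → ℤ) : ℝ :=
  ∏ j, max (|(h j : ℝ)| ^ (2 * α)) 1

/-- The squared Euclidean norm `‖h‖₂² = Σ_j h_j²` of `h ∈ ℤ^d`. -/
def normSq {d : ℕ} (h : Fin d → ℤ) : ℝ := ∑ j, (h j : ℝ) ^ 2

/-- The Euclidean norm of a complex vector. -/
def vecNorm {ι : Type*} [Fintype ι] (y : ι → ℂ) : ℝ := Real.sqrt (∑ ξ, ‖y ξ‖ ^ 2)

/-- The diagonal matrix `D` with entries `2π²γ‖h_ξ‖₂²`. -/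
def Dmat {d : ℕ} (γ : ℝ) (n : ℕ) (hfam : Fin n → Fin d → ℤ) :
    Matrix (Fin n) (Fin n) ℂ :=
  Matrix.diagonal fun ξ => ((2 * Real.pi ^ 2 * γ * normSq (hfam ξ) : ℝ) : ℂ)

/-- The multiplication matrix `W` with entries
`W_{ξ,ξ'} = (1/γ) Σ_{h·z ≡ ξ−ξ' (mod n)} v̂(h)`. -/
def Wmat {d : ℕ} (γ : ℝ) (vhat : (Fin d → ℤ) → ℂ) (n : ℕ) (z : Fin d → ℤ) :
    Matrix (Fin n) (Fin n) ℂ :=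
  Matrix.of fun ξ ξ' => (1 / (γ : ℂ)) *
    ∑' h : {h : Fin d → ℤ //
        ((dotZ h z : ZMod n)) = ((ξ : ℕ) : ZMod n) - ((ξ' : ℕ) : ZMod n)},
      vhat h.1

open Finset

lemma one_add_sum_le_prod_one_add {ι : Type*} (s : Finset ι) {f : ι → ℝ}
    (hf : ∀ i ∈ s, 0 ≤ f i) : 1 + ∑ i ∈ s, f i ≤ ∏ i ∈ s, (1 + f i) := by
  induction s using Finset.cons_induction with
  | empty => simp
  | cons a s _ ih =>
    rw [sum_cons, prod_cons]
    have hs := ih fun i hi => hf i (mem_cons_of_mem hi)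
    have ha0 := hf a (mem_cons_self a s)
    have hs0 : 0 ≤ ∑ i ∈ s, f i := sum_nonneg fun i hi => hf i (mem_cons_of_mem hi)
    nlinarith

lemma Summable.prod_comp_fin_pi {β : Type*} {f : β → ℝ} (hf : Summable f) (hf0 : 0 ≤ f)
    (d : ℕ) : Summable fun x : Fin d → β => ∏ j, f (x j) := by
  induction d with
  | zero => exact summable_of_hasFiniteSupport (Set.toFinite _)
  | succ d ih =>
    have hprod : Summable fun p : β × (Fin d → β) => f p.1 * ∏ j, f (p.2 j) :=
      Summable.mul_of_nonneg (f := f) (g := fun x : Fin d → β => ∏ j, f (x j)) hf ih hf0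
        fun x => prod_nonneg fun j _ => hf0 (x j)
    refine (hprod.comp_injective (Fin.consEquiv fun _ => β).symm.injective).congr fun x => ?_
    rw [Fin.prod_univ_succ]
    rfl

lemma summable_one_add_sq_sq_div_max_rpow {α : ℝ} (hα : 5 / 2 < α) :
    Summable fun k : ℤ => (1 + (k : ℝ) ^ 2) ^ 2 / max (|(k : ℝ)| ^ (2 * α)) 1 := by
  refine .of_norm_bounded_eventually
    ((Real.summable_abs_int_rpow (b := 2 * α - 4) (by linarith)).mul_left 4) ?_
  filter_upwards [(Set.finite_singleton (0 : ℤ)).compl_mem_cofinite] with k hk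
  have hk1 : (1 : ℝ) ≤ |(k : ℝ)| := by
    rw [← Int.cast_abs]; exact_mod_cast Int.one_le_abs hk
  have hpow : |(k : ℝ)| ^ (-(2 * α - 4)) * |(k : ℝ)| ^ (2 * α) = |(k : ℝ)| ^ 4 := by
    rw [← Real.rpow_add (by linarith), ← Real.rpow_natCast]; norm_num
  have hnum : (1 + (k : ℝ) ^ 2) ^ 2 ≤ 4 * |(k : ℝ)| ^ 4 := by
    have : 1 ≤ |(k : ℝ)| ^ 2 := one_le_pow₀ hk1
    rw [← sq_abs (k : ℝ)]; nlinarith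
  rw [Real.norm_of_nonneg (by positivity), div_le_iff₀ (by positivity)]
  calc (1 + (k : ℝ) ^ 2) ^ 2 ≤ 4 * (|(k : ℝ)| ^ (-(2 * α - 4)) * |(k : ℝ)| ^ (2 * α)) := by
        rwa [hpow]
    _ ≤ 4 * |(k : ℝ)| ^ (-(2 * α - 4)) * max (|(k : ℝ)| ^ (2 * α)) 1 := by
        rw [← mul_assoc]; gcongr; exact le_max_left _ _

lemma mul_le_sq_mul_add_sq_div {x y r : ℝ} (hr : 0 < r) : x * y ≤ x ^ 2 * r + y ^ 2 / r := by
  have key : x ^ 2 * r + y ^ 2 / r - x * y = ((x * r - y / 2) ^ 2 + 3 / 4 * y ^ 2) / r := by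
    field_simp; ring
  linarith [show 0 ≤ ((x * r - y / 2) ^ 2 + 3 / 4 * y ^ 2) / r by positivity]

lemma mul_mul_two_mul_add_le {c a b : ℝ} (hc : 0 ≤ c) (hb : 0 ≤ b) :
    c * (b * (2 * a + b)) ≤ (√c + c) * ((1 + c * a ^ 2) * (1 + b ^ 2)) := by
  obtain ⟨s, hs, rfl⟩ : ∃ s, 0 ≤ s ∧ c = s ^ 2 := ⟨√c, Real.sqrt_nonneg c, (Real.sq_sqrt hc).symm⟩
  rw [Real.sqrt_sq hs]
  set P := 1 + s ^ 2 * a ^ 2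
  have hsa : 2 * (s * a) ≤ P := by nlinarith [sq_nonneg (s * a - 1)]
  have hP : 1 ≤ P := le_add_of_nonneg_right (by positivity)
  have hb1 : b ≤ 1 + b ^ 2 := by nlinarith [sq_nonneg (b - 1)]
  have hb2 : b ^ 2 ≤ P * (1 + b ^ 2) := by nlinarith
  calc s ^ 2 * (b * (2 * a + b)) = s * b * (2 * (s * a)) + s ^ 2 * b ^ 2 := by ring
    _ ≤ s * b * P + s ^ 2 * (P * (1 + b ^ 2)) := by gcongr
    _ = s * (P * b) + s ^ 2 * (P * (1 + b ^ 2)) := by ring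
    _ ≤ s * (P * (1 + b ^ 2)) + s ^ 2 * (P * (1 + b ^ 2)) := by gcongr
    _ = _ := by ring

lemma sum_tsum_fiber {α β : Type*} [Fintype β] {F : α → ℝ} (hF : Summable F) (φ : α → β) :
    ∑ b, ∑' x : {x // φ x = b}, F x = ∑' x, F x := by
  have := (hF.hasSum.tsum_fiberwise φ).tsum_eq
  rwa [tsum_fintype] at this

lemma fin_natCast_bijective (n : ℕ) [NeZero n] :
    Function.Bijective fun ξ : Fin n => ((ξ : ℕ) : ZMod n) := by
  refine (Fintype.bijective_iff_injective_and_card _).2 ⟨fun ξ ξ' h => Fin.ext ?_, by simp⟩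
  simpa [ZMod.val_cast_of_lt ξ.2, ZMod.val_cast_of_lt ξ'.2] using congrArg ZMod.val h

lemma sum_fin_natCast_sub_left {M : Type*} [AddCommMonoid M] {n : ℕ} [NeZero n]
    (g : ZMod n → M) (ξ : Fin n) : ∑ ξ' : Fin n, g ((ξ : ℕ) - (ξ' : ℕ)) = ∑ r, g r :=
  Fintype.sum_bijective _ ((Equiv.subLeft _).bijective.comp (fin_natCast_bijective n)) _ _
    fun _ => rfl

lemma sum_fin_natCast_sub_right {M : Type*} [AddCommMonoid M] {n : ℕ} [NeZero n]
    (g : ZMod n → M) (ξ' : Fin n) : ∑ ξ : Fin n, g ((ξ : ℕ) - (ξ' : ℕ)) = ∑ r, g r :=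
  Fintype.sum_bijective _ ((Equiv.subRight _).bijective.comp (fin_natCast_bijective n)) _ _
    fun _ => rfl

lemma sum_sq_sum_mul_le_of_sum_le {ι κ : Type*} [Fintype ι] [Fintype κ] {G : ι → κ → ℝ}
    (hG : ∀ i j, 0 ≤ G i j) {R C : ℝ} (hR0 : 0 ≤ R) (hR : ∀ i, ∑ j, G i j ≤ R)
    (hC : ∀ j, ∑ i, G i j ≤ C) (w : κ → ℝ) :
    ∑ i, (∑ j, G i j * w j) ^ 2 ≤ R * C * ∑ j, w j ^ 2 := by
  have hrow (i : ι) : (∑ j, G i j * w j) ^ 2 ≤ R * ∑ j, G i j * w j ^ 2 :=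
    (sum_sq_le_sum_mul_sum_of_sq_le_mul _ (fun j _ => hG i j)
      (fun j _ => mul_nonneg (hG i j) (sq_nonneg _)) fun j _ => le_of_eq (by ring)).trans
      (mul_le_mul_of_nonneg_right (hR i) (sum_nonneg fun j _ => mul_nonneg (hG i j) (sq_nonneg _)))
  calc ∑ i, (∑ j, G i j * w j) ^ 2 ≤ ∑ i, R * ∑ j, G i j * w j ^ 2 := sum_le_sum fun i _ => hrow i
    _ = R * ∑ j, (∑ i, G i j) * w j ^ 2 := by
      rw [← mul_sum, sum_comm]
      simp_rw [sum_mul]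
    _ ≤ R * ∑ j, C * w j ^ 2 := by
      gcongr with j
      exact hC j
    _ = R * C * ∑ j, w j ^ 2 := by rw [← mul_sum, mul_assoc]

lemma vecNorm_le_of_norm_le_sum_mul {ι κ : Type*} [Fintype ι] [Fintype κ] {G : ι → κ → ℝ}
    (hG : ∀ i j, 0 ≤ G i j) {S : ℝ} (hS : 0 ≤ S) (hrow : ∀ i, ∑ j, G i j ≤ S)
    (hcol : ∀ j, ∑ i, G i j ≤ S) {x : ι → ℂ} {w : κ → ℂ}
    (hx : ∀ i, ‖x i‖ ≤ ∑ j, G i j * ‖w j‖) : vecNorm x ≤ S * vecNorm w := by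
  rw [vecNorm, vecNorm, ← Real.sqrt_sq hS, ← Real.sqrt_mul (sq_nonneg S), sq]
  exact Real.sqrt_le_sqrt
    ((sum_le_sum fun i _ => pow_le_pow_left₀ (norm_nonneg _) (hx i) 2).trans
      (sum_sq_sum_mul_le_of_sum_le hG hS hrow hcol fun j => ‖w j‖))

lemma Matrix.norm_mulVec_apply_le {m n : Type*} [Fintype n] (A : Matrix m n ℂ) (y : n → ℂ)
    (i : m) : ‖A.mulVec y i‖ ≤ ∑ j, ‖A i j‖ * ‖y j‖ :=
  (norm_sum_le _ _).trans_eq (by simp_rw [norm_mul])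

lemma Matrix.diagonal_mul_sub_mul_diagonal_apply {m R : Type*} [Fintype m] [DecidableEq m]
    [CommRing R] (d : m → R) (M : Matrix m m R) (i j : m) :
    (diagonal d * M - M * diagonal d) i j = (d i - d j) * M i j := by
  rw [sub_apply, diagonal_mul, mul_diagonal]
  ring

lemma normSq_nonneg {d : ℕ} (h : Fin d → ℤ) : 0 ≤ normSq h :=
  sum_nonneg fun _ _ => sq_nonneg _

lemma normSq_neg {d : ℕ} (h : Fin d → ℤ) : normSq (-h) = normSq h := by
  simp [normSq]

lemma sqrt_normSq_eq_norm {d : ℕ} (h : Fin d → ℤ) :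
    √(normSq h) = ‖(WithLp.toLp 2 fun j => (h j : ℝ) : EuclideanSpace ℝ (Fin d))‖ := by
  simp [EuclideanSpace.norm_eq, normSq]

lemma sqrt_normSq_add_le {d : ℕ} (a b : Fin d → ℤ) :
    √(normSq (a + b)) ≤ √(normSq a) + √(normSq b) := by
  have hadd : (WithLp.toLp 2 fun j => ((a + b) j : ℝ) : EuclideanSpace ℝ (Fin d)) =
      WithLp.toLp 2 (fun j => (a j : ℝ)) + WithLp.toLp 2 fun j => (b j : ℝ) := by
    rw [← WithLp.toLp_add]
    congr 1
    ext j
    simp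
  simpa only [sqrt_normSq_eq_norm, hadd] using norm_add_le _ _

lemma dotZ_eq_dotProduct {d : ℕ} (h z : Fin d → ℤ) : dotZ h z = h ⬝ᵥ z := rfl

lemma korWeightSq_pos {d : ℕ} (α : ℝ) (h : Fin d → ℤ) : 0 < korWeightSq α h :=
  prod_pos fun _ _ => lt_max_of_lt_right one_pos

lemma one_add_normSq_sq_div_korWeightSq_le {d : ℕ} (α : ℝ) (h : Fin d → ℤ) :
    (1 + normSq h) ^ 2 / korWeightSq α h ≤
      ∏ j, (1 + (h j : ℝ) ^ 2) ^ 2 / max (|(h j : ℝ)| ^ (2 * α)) 1 := by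
  rw [prod_div_distrib, prod_pow]
  exact div_le_div_of_nonneg_right
    (pow_le_pow_left₀ (add_nonneg zero_le_one (normSq_nonneg h))
      (one_add_sum_le_prod_one_add _ fun j _ => sq_nonneg _) 2)
    (korWeightSq_pos α h).le

lemma summable_norm_mul_one_add_normSq {d : ℕ} {α : ℝ} (hα : 5 / 2 < α)
    {vhat : (Fin d → ℤ) → ℂ} (hv : Summable fun h => ‖vhat h‖ ^ 2 * korWeightSq α h) :
    Summable fun h => ‖vhat h‖ * (1 + normSq h) := by
  have hprod := (summable_one_add_sq_sq_div_max_rpow hα).prod_comp_fin_pi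
    (fun k => by positivity) d
  refine (hv.add hprod).of_nonneg_of_le
    (fun h => mul_nonneg (norm_nonneg _) (add_nonneg zero_le_one (normSq_nonneg h))) fun h => ?_
  calc ‖vhat h‖ * (1 + normSq h)
      ≤ ‖vhat h‖ ^ 2 * korWeightSq α h + (1 + normSq h) ^ 2 / korWeightSq α h :=
        mul_le_sq_mul_add_sq_div (korWeightSq_pos α h)
    _ ≤ _ := (add_le_add_iff_left _).2 (one_add_normSq_sq_div_korWeightSq_le α h)

lemma sqrt_normSq_le_of_forall_normSq_le {d : ℕ} (n : ℕ) (z : Fin d → ℤ) {a b h : Fin d → ℤ}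
    (hmin : ∀ h' : Fin d → ℤ,
      (dotZ h' z : ZMod n) = dotZ b z + dotZ h z → normSq a ≤ normSq h') :
    √(normSq a) ≤ √(normSq b) + √(normSq h) :=
  (Real.sqrt_le_sqrt (hmin (b + h) (by simp [dotZ_eq_dotProduct, add_dotProduct]))).trans
    (sqrt_normSq_add_le b h)

lemma abs_normSq_sub_le_of_minimal {d n : ℕ} {z : Fin d → ℤ} {hfam : Fin n → Fin d → ℤ}
    (hdot : ∀ ξ : Fin n, (dotZ (hfam ξ) z : ZMod n) = ((ξ : ℕ) : ZMod n))
    (hmin : ∀ (ξ : Fin n) (h : Fin d → ℤ),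
      (dotZ h z : ZMod n) = ((ξ : ℕ) : ZMod n) → normSq (hfam ξ) ≤ normSq h)
    {ξ ξ' : Fin n} {h : Fin d → ℤ}
    (hc : (dotZ h z : ZMod n) = ((ξ : ℕ) : ZMod n) - ((ξ' : ℕ) : ZMod n)) :
    |normSq (hfam ξ) - normSq (hfam ξ')| ≤
      √(normSq h) * (2 * √(normSq (hfam ξ')) + √(normSq h)) := by
  have hle : √(normSq (hfam ξ)) ≤ √(normSq (hfam ξ')) + √(normSq h) :=
    sqrt_normSq_le_of_forall_normSq_le n z fun h' hh' => hmin ξ h' (by rw [hh', hdot, hc]; ring)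
  have hge : √(normSq (hfam ξ')) ≤ √(normSq (hfam ξ)) + √(normSq h) := by
    rw [← normSq_neg h]
    refine sqrt_normSq_le_of_forall_normSq_le n z fun h' hh' => hmin ξ' h' ?_
    rw [hh', hdot, dotZ_eq_dotProduct, neg_dotProduct, Int.cast_neg, ← dotZ_eq_dotProduct, hc]
    ring
  have key : |√(normSq (hfam ξ)) ^ 2 - √(normSq (hfam ξ')) ^ 2| ≤
      √(normSq h) * (2 * √(normSq (hfam ξ')) + √(normSq h)) := by
    have := Real.sqrt_nonneg (normSq (hfam ξ))
    have := Real.sqrt_nonneg (normSq (hfam ξ'))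
    have := Real.sqrt_nonneg (normSq h)
    rw [abs_le]
    constructor <;> nlinarith
  rwa [Real.sq_sqrt (normSq_nonneg _), Real.sq_sqrt (normSq_nonneg _)] at key

def fiberSum {d : ℕ} (n : ℕ) (z : Fin d → ℤ) (F : (Fin d → ℤ) → ℝ) (r : ZMod n) : ℝ :=
  ∑' h : {h : Fin d → ℤ // (dotZ h z : ZMod n) = r}, F h

lemma norm_Wmat_apply_le {d n : ℕ} {γ : ℝ} (hγ : 0 < γ) {vhat : (Fin d → ℤ) → ℂ}
    (hv : Summable fun h => ‖vhat h‖) (z : Fin d → ℤ) (ξ ξ' : Fin n) :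
    ‖Wmat γ vhat n z ξ ξ'‖ ≤ γ⁻¹ * fiberSum n z (fun h => ‖vhat h‖) ((ξ : ℕ) - (ξ' : ℕ)) := by
  rw [Wmat, Matrix.of_apply, norm_mul, one_div, norm_inv, Complex.norm_real,
    Real.norm_of_nonneg hγ.le]
  gcongr
  exact norm_tsum_le_tsum_norm (hv.subtype _)

lemma norm_Dmat_add_one_mulVec_apply {d n : ℕ} {γ : ℝ} (hγ : 0 ≤ γ)
    (hfam : Fin n → Fin d → ℤ) (y : Fin n → ℂ) (ξ : Fin n) :
    ‖(Dmat γ n hfam + 1).mulVec y ξ‖ = (1 + 2 * Real.pi ^ 2 * γ * normSq (hfam ξ)) * ‖y ξ‖ := by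
  rw [Dmat, ← Matrix.diagonal_one, Matrix.diagonal_add, Matrix.mulVec_diagonal, norm_mul,
    ← Complex.ofReal_one, ← Complex.ofReal_add, Complex.norm_real,
    Real.norm_of_nonneg (add_nonneg (mul_nonneg (by positivity) (normSq_nonneg _)) zero_le_one),
    add_comm]

lemma norm_commutator_apply_le {d n : ℕ} {γ : ℝ} (hγ : 0 < γ) {vhat : (Fin d → ℤ) → ℂ}
    (hF : Summable fun h => ‖vhat h‖ * (1 + normSq h)) {z : Fin d → ℤ}
    {hfam : Fin n → Fin d → ℤ}
    (hdot : ∀ ξ : Fin n, (dotZ (hfam ξ) z : ZMod n) = ((ξ : ℕ) : ZMod n))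
    (hmin : ∀ (ξ : Fin n) (h : Fin d → ℤ),
      (dotZ h z : ZMod n) = ((ξ : ℕ) : ZMod n) → normSq (hfam ξ) ≤ normSq h)
    (ξ ξ' : Fin n) :
    ‖(Dmat γ n hfam * Wmat γ vhat n z - Wmat γ vhat n z * Dmat γ n hfam) ξ ξ'‖ ≤
      (√(2 * Real.pi ^ 2 * γ) + 2 * Real.pi ^ 2 * γ) / γ *
        fiberSum n z (fun h => ‖vhat h‖ * (1 + normSq h)) ((ξ : ℕ) - (ξ' : ℕ)) *
        (1 + 2 * Real.pi ^ 2 * γ * normSq (hfam ξ')) := by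
  set c := 2 * Real.pi ^ 2 * γ
  have hc : 0 ≤ c := by positivity
  have hv : Summable fun h => ‖vhat h‖ :=
    hF.of_nonneg_of_le (fun _ => norm_nonneg _) fun h =>
      le_mul_of_one_le_right (norm_nonneg _) (le_add_of_nonneg_right (normSq_nonneg h))
  have hterm (h : {h : Fin d → ℤ //
      (dotZ h z : ZMod n) = ((ξ : ℕ) : ZMod n) - ((ξ' : ℕ) : ZMod n)}) :
      c * |normSq (hfam ξ) - normSq (hfam ξ')| * ‖vhat h.1‖ ≤
        (√c + c) * (1 + c * normSq (hfam ξ')) * (‖vhat h.1‖ * (1 + normSq h.1)) := by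
    have hscal := mul_mul_two_mul_add_le (a := √(normSq (hfam ξ'))) hc
      (Real.sqrt_nonneg (normSq h.1))
    rw [Real.sq_sqrt (normSq_nonneg _), Real.sq_sqrt (normSq_nonneg _)] at hscal
    calc c * |normSq (hfam ξ) - normSq (hfam ξ')| * ‖vhat h.1‖
        ≤ c * (√(normSq h.1) * (2 * √(normSq (hfam ξ')) + √(normSq h.1))) * ‖vhat h.1‖ := by
          gcongr
          exact abs_normSq_sub_le_of_minimal hdot hmin h.2
      _ ≤ (√c + c) * ((1 + c * normSq (hfam ξ')) * (1 + normSq h.1)) * ‖vhat h.1‖ := by gcongr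
      _ = _ := by ring
  have hsum : c * |normSq (hfam ξ) - normSq (hfam ξ')| *
      fiberSum n z (fun h => ‖vhat h‖) ((ξ : ℕ) - (ξ' : ℕ)) ≤
        (√c + c) * (1 + c * normSq (hfam ξ')) *
          fiberSum n z (fun h => ‖vhat h‖ * (1 + normSq h)) ((ξ : ℕ) - (ξ' : ℕ)) := by
    simp only [fiberSum, ← tsum_mul_left]
    exact Summable.tsum_le_tsum hterm ((hv.subtype _).mul_left _) ((hF.subtype _).mul_left _)
  rw [Dmat, Matrix.diagonal_mul_sub_mul_diagonal_apply, norm_mul, ← Complex.ofReal_sub,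
    Complex.norm_real, ← mul_sub, Real.norm_eq_abs, abs_mul, abs_of_nonneg hc]
  calc c * |normSq (hfam ξ) - normSq (hfam ξ')| * ‖Wmat γ vhat n z ξ ξ'‖
      ≤ c * |normSq (hfam ξ) - normSq (hfam ξ')| *
          (γ⁻¹ * fiberSum n z (fun h => ‖vhat h‖) ((ξ : ℕ) - (ξ' : ℕ))) := by
        gcongr
        exact norm_Wmat_apply_le hγ hv z ξ ξ'
    _ ≤ γ⁻¹ * ((√c + c) * (1 + c * normSq (hfam ξ')) *
          fiberSum n z (fun h => ‖vhat h‖ * (1 + normSq h)) ((ξ : ℕ) - (ξ' : ℕ))) := by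
        rw [mul_left_comm]
        gcongr
    _ = _ := by rw [div_eq_mul_inv]; ring

theorem rank1_first_commutator_bound_general
    (d : ℕ) (γ : ℝ) (hγ : 0 < γ) (α : ℝ) (hα : 5 / 2 < α)
    (vhat : (Fin d → ℤ) → ℂ)
    (hv : Summable fun h : Fin d → ℤ => ‖vhat h‖ ^ 2 * korWeightSq α h) :
    ∃ c₁ : ℝ, 0 < c₁ ∧
      ∀ (n : ℕ), 1 ≤ n → ∀ (z : Fin d → ℤ) (hfam : Fin n → Fin d → ℤ),
        (∀ ξ : Fin n, ((dotZ (hfam ξ) z : ZMod n)) = ((ξ : ℕ) : ZMod n)) →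
        (∀ (ξ : Fin n) (h : Fin d → ℤ),
            ((dotZ h z : ZMod n)) = ((ξ : ℕ) : ZMod n) → normSq (hfam ξ) ≤ normSq h) →
        ∀ y : Fin n → ℂ,
          vecNorm ((Dmat γ n hfam * Wmat γ vhat n z
              - Wmat γ vhat n z * Dmat γ n hfam).mulVec y)
            ≤ c₁ * vecNorm ((Dmat γ n hfam + 1).mulVec y) := by
  set c := 2 * Real.pi ^ 2 * γ
  have hF := summable_norm_mul_one_add_normSq hα hv
  set S := (√c + c) / γ * ∑' h, ‖vhat h‖ * (1 + normSq h)
  have hF0 (h : Fin d → ℤ) : 0 ≤ ‖vhat h‖ * (1 + normSq h) :=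
    mul_nonneg (norm_nonneg _) (add_nonneg zero_le_one (normSq_nonneg h))
  have hS : 0 ≤ S := mul_nonneg (by positivity) (tsum_nonneg hF0)
  refine ⟨S + 1, by linarith, fun n hn z hfam hdot hmin y => ?_⟩
  have : NeZero n := ⟨by omega⟩
  set g : ZMod n → ℝ := fun r =>
    (√c + c) / γ * fiberSum n z (fun h => ‖vhat h‖ * (1 + normSq h)) r
  have hg : ∑ r, g r = S := by
    rw [← mul_sum]
    exact congrArg _ (sum_tsum_fiber hF fun h => (dotZ h z : ZMod n))
  calc _ ≤ S * vecNorm ((Dmat γ n hfam + 1).mulVec y) := by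
        refine vecNorm_le_of_norm_le_sum_mul (G := fun ξ ξ' : Fin n => g ((ξ : ℕ) - (ξ' : ℕ)))
          (fun _ _ => mul_nonneg (by positivity) (tsum_nonneg fun h => hF0 h.1)) hS
          (fun ξ => (sum_fin_natCast_sub_left g ξ).trans_le hg.le)
          (fun ξ' => (sum_fin_natCast_sub_right g ξ').trans_le hg.le) fun ξ => ?_
        refine (Matrix.norm_mulVec_apply_le _ y ξ).trans (sum_le_sum fun ξ' _ => ?_)
        rw [norm_Dmat_add_one_mulVec_apply hγ.le, ← mul_assoc]
        gcongr
        exact norm_commutator_apply_le hγ hF hdot hmin ξ ξ'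
    _ ≤ (S + 1) * vecNorm ((Dmat γ n hfam + 1).mulVec y) :=
        mul_le_mul_of_nonneg_right (by linarith) (Real.sqrt_nonneg _)

/-- **Rank-1 lattice first commutator bound.** For `α > 5/2` and `‖v̂‖_α < ∞`,
there is `c₁ > 0`, independent of the modulus `n`, the generating vector `z`,
the minimal anti-aliasing family and `y`, such that
`‖(DW − WD) y‖₂ ≤ c₁ ‖(D + I) y‖₂`. -/
theorem rank1_first_commutator_bound
    (d : ℕ) (hd : 1 ≤ d) (γ : ℝ) (hγ : 0 < γ) (α : ℝ) (hα : 5 / 2 < α)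
    (vhat : (Fin d → ℤ) → ℂ)
    (hv : Summable fun h : Fin d → ℤ => ‖vhat h‖ ^ 2 * korWeightSq α h) :
    ∃ c₁ : ℝ, 0 < c₁ ∧
      ∀ (n : ℕ), 1 ≤ n → ∀ (z : Fin d → ℤ) (hfam : Fin n → Fin d → ℤ),
        (∀ ξ : Fin n, ((dotZ (hfam ξ) z : ZMod n)) = ((ξ : ℕ) : ZMod n)) →
        (∀ (ξ : Fin n) (h : Fin d → ℤ),
            ((dotZ h z : ZMod n)) = ((ξ : ℕ) : ZMod n) → normSq (hfam ξ) ≤ normSq h) →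
        ∀ y : Fin n → ℂ,
          vecNorm ((Dmat γ n hfam * Wmat γ vhat n z
              - Wmat γ vhat n z * Dmat γ n hfam).mulVec y)
            ≤ c₁ * vecNorm ((Dmat γ n hfam + 1).mulVec y) :=
  rank1_first_commutator_bound_general d γ hγ α hα vhat hv

end
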